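/- Let p : S → A be a quasi-constant pattern with nonconstant term r and let a ∈ A with a ≠ p(e). Then τ_p^a is idempotent if and only if one of the following holds: (1) a ≠ p(s) for all s ∈ S; (2) r ≠ e and r² ∈ S; (3) r = e and S = S⁻¹. -/

import Mathlib

variable {G A : Type*}

def shift [Group G] (g : G) (x : G → A) : G → A := fun h => x (g⁻¹ * h)

def restrictPat (S : Finset G) (x : G → A) : S → A := fun s => x s

def muP [Group G] [DecidableEq A] (S : Finset G) (p : S → A) (a : A)
    (he : (1 : G) ∈ S) (z : S → A) : A :=
  if z = p then a else z ⟨1, he⟩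

def tauP [Group G] [DecidableEq A] (S : Finset G) (p : S → A) (a : A)
    (he : (1 : G) ∈ S) (x : G → A) : G → A :=
  fun g => muP S p a he (restrictPat S (shift g⁻¹ x))

/-!
Since `τ` writes `a ≠ p(e)` exactly at the occurrences of `p`, it is idempotent iff `p` never
occurs in an image `τ x`. If `p` occurs in `τ x` at `g`, it does not occur in `x` at `g` (else
`τ x g = a`), so `τ` must have written `a = p s` at some `g s`. Write `p = b` off `r`. Under (1)
no such `s` exists; under (2) an occurrence in `x` at `g r` would clash with the value `b` at
`g r r`; under (3) one at `g s` would clash with the value `p(e) ≠ b` at `g = g s s⁻¹`.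
Conversely, when all three fail, a configuration with a single occurrence of `p`, at `r` (resp. at
an `s₀` with `s₀⁻¹ ∉ S`), is mapped by `τ` to one containing `p`.
-/

/-- `(g⁻¹ • x)|_S = p` in the notation of the paper. -/
def Occurs [Mul G] (S : Finset G) (p : S → A) (x : G → A) (g : G) : Prop :=
  ∀ s : S, x (g * s) = p s

section Idempotence

variable [Group G] {S : Finset G} {p : S → A} {a : A} {he : (1 : G) ∈ S} {x : G → A} {g : G}

theorem restrictPat_shift_inv_eq_iff :
    restrictPat S (shift g⁻¹ x) = p ↔ Occurs S p x g := by
  simp only [funext_iff, restrictPat, shift, inv_inv, Occurs]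

theorem Occurs.apply_self (h : Occurs S p x g) : x g = p ⟨1, he⟩ := by
  simpa using h ⟨1, he⟩

variable [DecidableEq A]

theorem tauP_of_occurs (h : Occurs S p x g) : tauP S p a he x g = a :=
  if_pos (restrictPat_shift_inv_eq_iff.mpr h)

theorem tauP_of_not_occurs (h : ¬ Occurs S p x g) : tauP S p a he x g = x g := by
  simp only [tauP, muP, if_neg (mt restrictPat_shift_inv_eq_iff.mp h), restrictPat, shift,
    inv_inv, mul_one]

theorem not_occurs_tauP_of_occurs (ha : a ≠ p ⟨1, he⟩) (h : Occurs S p x g) :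
    ¬ Occurs S p (tauP S p a he x) g := fun h' =>
  ha ((tauP_of_occurs h).symm.trans h'.apply_self)

theorem tauP_comp_self_eq_iff (ha : a ≠ p ⟨1, he⟩) :
    tauP S p a he ∘ tauP S p a he = tauP S p a he ↔
      ∀ x g, ¬ Occurs S p (tauP S p a he x) g := by
  constructor
  · intro hid x g h
    have hfix : tauP S p a he (tauP S p a he x) g = tauP S p a he x g :=
      congrFun (congrFun hid x) g
    exact ha ((tauP_of_occurs h).symm.trans (hfix.trans h.apply_self))
  · intro h
    funext x g
    exact tauP_of_not_occurs (h x g)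

theorem Occurs.apply_of_not_occurs (h : Occurs S p (tauP S p a he x) g) {s : S}
    (hs : ¬ Occurs S p x (g * s)) : x (g * s) = p s :=
  (tauP_of_not_occurs hs).symm.trans (h s)

theorem Occurs.apply_of_ne (h : Occurs S p (tauP S p a he x) g) {s : S} (hs : a ≠ p s) :
    x (g * s) = p s :=
  h.apply_of_not_occurs fun hocc => hs ((tauP_of_occurs hocc).symm.trans (h s))

theorem not_occurs_tauP_of_forall_ne (ha : ∀ s : S, a ≠ p s) :
    ¬ Occurs S p (tauP S p a he x) g := fun h =>
  not_occurs_tauP_of_occurs (ha _) (fun s => h.apply_of_ne (ha s)) h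

theorem occurs_tauP_one {s₀ : S} (hocc : Occurs S p x s₀)
    (huniq : ∀ s : S, Occurs S p x s → s = s₀) (ha : a = p s₀)
    (hx : ∀ s : S, s ≠ s₀ → x s = p s) :
    Occurs S p (tauP S p a he x) 1 := by
  intro s
  rw [one_mul]
  by_cases hs : s = s₀
  · subst hs
    exact (tauP_of_occurs hocc).trans ha
  · exact (tauP_of_not_occurs fun h => hs (huniq s h)).trans (hx s hs)

end Idempotence

theorem exists_value_off_of_not_const {S : Finset G} {p : S → A} {r : G} (hr : r ∈ S)
    (hnc : ¬ ∀ s t : S, p s = p t)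
    (hq : ∀ s t : S, (s : G) ≠ r → (t : G) ≠ r → p s = p t) :
    ∃ b, (∀ s : S, (s : G) ≠ r → p s = b) ∧ p ⟨r, hr⟩ ≠ b := by
  obtain ⟨s₁, hs₁⟩ : ∃ s₁ : S, (s₁ : G) ≠ r := by
    by_contra! h
    exact hnc fun s t => congrArg p (Subtype.ext ((h s).trans (h t).symm))
  refine ⟨p s₁, fun s hs => hq s s₁ hs hs₁, fun hrb => hnc fun s t => ?_⟩
  have hconst : ∀ s : S, p s = p s₁ := by
    intro s
    by_cases hs : (s : G) = r
    · rw [show s = ⟨r, hr⟩ from Subtype.ext hs, hrb]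
    · exact hq s s₁ hs hs₁
  exact (hconst s).trans (hconst t).symm

section QuasiConstant

variable [Group G] [DecidableEq A] {S : Finset G} {p : S → A} {a b : A} {he : (1 : G) ∈ S}
  {r : G}

theorem not_occurs_tauP_of_mul_self_mem (hr : r ∈ S) (hpb : ∀ s : S, (s : G) ≠ r → p s = b)
    (hpr : p ⟨r, hr⟩ ≠ b) (hr1 : r ≠ 1) (hrr : r * r ∈ S) (hab : a ≠ b) {x : G → A} {g : G} :
    ¬ Occurs S p (tauP S p a he x) g := by
  intro h
  have hoff : ∀ s : S, (s : G) ≠ r → x (g * s) = p s := fun s hs =>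
    h.apply_of_ne (by rwa [hpb s hs])
  have hnot : ¬ Occurs S p x (g * r) := by
    intro hocc
    have hrr_ne : r * r ≠ r := fun h => hr1 (mul_eq_left.mp h)
    have h1 : x (g * r * r) = p ⟨r, hr⟩ := hocc ⟨r, hr⟩
    have h2 : x (g * (r * r)) = b := (hoff ⟨r * r, hrr⟩ hrr_ne).trans (hpb _ hrr_ne)
    exact hpr (h1.symm.trans ((mul_assoc g r r).symm ▸ h2))
  have hocc : Occurs S p x g := by
    intro s
    by_cases hs : (s : G) = r
    · obtain rfl : s = ⟨r, hr⟩ := Subtype.ext hs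
      exact h.apply_of_not_occurs hnot
    · exact hoff s hs
  exact not_occurs_tauP_of_occurs (by rwa [hpb ⟨1, he⟩ (Ne.symm hr1)]) hocc h

theorem not_occurs_tauP_of_inv_mem (hpb : ∀ s : S, (s : G) ≠ 1 → p s = b)
    (hp1 : p ⟨1, he⟩ ≠ b) (hsymm : ∀ s ∈ S, s⁻¹ ∈ S) (ha : a ≠ p ⟨1, he⟩) {x : G → A} {g : G} :
    ¬ Occurs S p (tauP S p a he x) g := by
  intro h
  have hxg : x g = p ⟨1, he⟩ := by simpa using h.apply_of_ne ha
  have hnot : ∀ s : S, (s : G) ≠ 1 → ¬ Occurs S p x (g * s) := by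
    intro s hs hocc
    have hinv := hocc ⟨_, hsymm s s.2⟩
    rw [mul_inv_cancel_right, hpb _ (inv_ne_one.mpr hs)] at hinv
    exact hp1 (hxg.symm.trans hinv)
  have hocc : Occurs S p x g := by
    intro s
    by_cases hs : (s : G) = 1
    · obtain rfl : s = ⟨1, he⟩ := Subtype.ext hs
      simpa using hxg
    · exact h.apply_of_not_occurs (hnot s hs)
  exact not_occurs_tauP_of_occurs ha hocc h

theorem exists_occurs_tauP_of_mul_self_not_mem (hr : r ∈ S)
    (hpb : ∀ s : S, (s : G) ≠ r → p s = b) (hpr : p ⟨r, hr⟩ ≠ b) (hrr : r * r ∉ S)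
    (ha : a = p ⟨r, hr⟩) : ∃ x : G → A, Occurs S p (tauP S p a he x) 1 := by
  classical
  -- `p` occurs in `x` exactly at `r`, and `x = p` on `S \ {r}` because `r * r ∉ S`
  let x : G → A := fun h => if h = r * r then p ⟨r, hr⟩ else b
  refine ⟨x, occurs_tauP_one (s₀ := ⟨r, hr⟩) ?_ ?_ ha ?_⟩
  · intro t
    by_cases ht : (t : G) = r
    · obtain rfl : t = ⟨r, hr⟩ := Subtype.ext ht
      simp [x]
    · simp [x, ht, hpb t ht]
  · intro s hocc
    have h := hocc ⟨r, hr⟩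
    by_cases hs : (s : G) * r = r * r
    · exact Subtype.ext (mul_right_cancel hs)
    · simp only [x, if_neg hs] at h
      exact absurd h.symm hpr
  · intro s hs
    have hs' : (s : G) ≠ r := fun h => hs (Subtype.ext h)
    have hsrr : (s : G) ≠ r * r := fun h => hrr (h ▸ s.2)
    simp [x, hsrr, hpb s hs']

theorem exists_occurs_tauP_of_inv_not_mem (hpb : ∀ s : S, (s : G) ≠ 1 → p s = b)
    (hp1 : p ⟨1, he⟩ ≠ b) {s₀ : G} (hs₀ : s₀ ∈ S) (hs₀inv : s₀⁻¹ ∉ S) (ha : a = b) :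
    ∃ x : G → A, Occurs S p (tauP S p a he x) 1 := by
  classical
  have hs₀1 : s₀ ≠ 1 := fun h => hs₀inv (by simpa [h] using he)
  -- `p` occurs in `x` exactly at `s₀` (as `s₀⁻¹ ∉ S`), and `x = p` on `S \ {s₀}`
  let x : G → A := fun h => if h = 1 ∨ h = s₀ then p ⟨1, he⟩ else b
  refine ⟨x, occurs_tauP_one (s₀ := ⟨s₀, hs₀⟩) ?_ ?_ (ha.trans (hpb _ hs₀1).symm) ?_⟩
  · intro t
    by_cases ht : (t : G) = 1
    · obtain rfl : t = ⟨1, he⟩ := Subtype.ext ht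
      simp [x]
    · have hne : ¬ (s₀ * t = 1 ∨ s₀ * t = s₀) := by
        rintro (h | h)
        · exact hs₀inv (eq_inv_of_mul_eq_one_right h ▸ t.2)
        · exact ht (mul_eq_left.mp h)
      simp only [x, if_neg hne, hpb t ht]
  · intro s hocc
    have h1 := hocc ⟨1, he⟩
    have h2 := hocc ⟨s₀, hs₀⟩
    simp only [mul_one, x] at h1 h2
    by_cases hs : (s : G) = 1 ∨ (s : G) = s₀
    · rcases hs with hs | hs
      · simp only [hs, one_mul, or_true, if_true] at h2
        exact absurd (h2.trans (hpb ⟨s₀, hs₀⟩ hs₀1)) hp1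
      · exact Subtype.ext hs
    · rw [if_neg hs] at h1
      exact absurd h1.symm hp1
  · intro s hs
    have hs' : (s : G) ≠ s₀ := fun h => hs (Subtype.ext h)
    by_cases h1 : (s : G) = 1
    · obtain rfl : s = ⟨1, he⟩ := Subtype.ext h1
      simp [x]
    · simp [x, h1, hs', hpb s h1]

end QuasiConstant

theorem quasiConstant_idempotent_characterization_general [Group G] [DecidableEq A]
    (S : Finset G) (he : (1 : G) ∈ S)
    (p : S → A) (r : G) (hr : r ∈ S)
    (hnc : ¬ ∀ s t : S, p s = p t)
    (hq : ∀ s t : S, (s : G) ≠ r → (t : G) ≠ r → p s = p t)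
    (a : A) (ha : a ≠ p ⟨1, he⟩) :
    tauP S p a he ∘ tauP S p a he = tauP S p a he ↔
      ((∀ s : S, a ≠ p s) ∨ (r ≠ 1 ∧ r * r ∈ S) ∨ (r = 1 ∧ ∀ s ∈ S, s⁻¹ ∈ S)) := by
  obtain ⟨b, hpb, hpr⟩ := exists_value_off_of_not_const hr hnc hq
  rw [tauP_comp_self_eq_iff ha]
  constructor
  · intro hno
    by_contra! hcond
    obtain ⟨⟨s, has⟩, hr2, hr3⟩ := hcond
    by_cases hr1 : r = 1
    · subst hr1
      obtain ⟨s₀, hs₀, hs₀inv⟩ := hr3 rfl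
      have hs1 : (s : G) ≠ 1 := fun h => ha (has.trans (congrArg p (Subtype.ext h)))
      obtain ⟨x, hx⟩ := exists_occurs_tauP_of_inv_not_mem hpb hpr hs₀ hs₀inv
        (has.trans (hpb s hs1))
      exact hno x 1 hx
    · have hsr : (s : G) = r := by
        by_contra hsr
        exact ha (has.trans ((hpb s hsr).trans (hpb ⟨1, he⟩ (Ne.symm hr1)).symm))
      obtain rfl : s = ⟨r, hr⟩ := Subtype.ext hsr
      obtain ⟨x, hx⟩ := exists_occurs_tauP_of_mul_self_not_mem hr hpb hpr (hr2 hr1) has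
      exact hno x 1 hx
  · rintro (h1 | ⟨hr1, hrr⟩ | ⟨rfl, hsymm⟩) x g
    · exact not_occurs_tauP_of_forall_ne h1
    · exact not_occurs_tauP_of_mul_self_mem hr hpb hpr hr1 hrr
        (by rwa [hpb ⟨1, he⟩ (Ne.symm hr1)] at ha)
    · exact not_occurs_tauP_of_inv_mem hpb hpr hsymm ha

theorem quasiConstant_idempotent_characterization [Group G] [Fintype A] [DecidableEq A]
    (hA : 2 ≤ Fintype.card A) (S : Finset G) (he : (1 : G) ∈ S)
    (p : S → A) (r : G) (hr : r ∈ S)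
    (hnc : ¬ ∀ s t : S, p s = p t)
    (hq : ∀ s t : S, (s : G) ≠ r → (t : G) ≠ r → p s = p t)
    (a : A) (ha : a ≠ p ⟨1, he⟩) :
    tauP S p a he ∘ tauP S p a he = tauP S p a he ↔
      ((∀ s : S, a ≠ p s) ∨ (r ≠ 1 ∧ r * r ∈ S) ∨ (r = 1 ∧ ∀ s ∈ S, s⁻¹ ∈ S)) :=
  quasiConstant_idempotent_characterization_general S he p r hr hnc hq a ha
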